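/- arXiv:2501.08721 — 3 statements merged into one kernel-verified Lean document; each statement's English description precedes it below -/
import Mathlib

section
/- Let τ, σ be nonzero reals, u > 0, B, κ ∈ ℂ with |B|² ≠ u² and κ ≠ 0, and suppose ξ ∈ ℂ satisfies (iτB/u)ξ + iτ·conj(ξ) + κ|ξ|² = 0 and (iσB/u)ξ + iσ·conj(ξ) + κ = 0. Then (conj(κ) + κ·conj(B)/u)·(κ + conj(κ)·B/u) = τσ·(1 − |B|²/u²)². -/
/-!
Subtracting τ times the second equation from σ times the first leaves κ (σ|ξ|² − τ) = 0, so
σ|ξ|² = τ. The second equation says κ = −iσ(bξ + ξ̄) with b = B/u, and then the two factors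
collapse to iσξ(1 − |b|²) and −iσξ̄(1 − |b|²), whose product is σ²|ξ|²(1 − |b|²)² = τσ(1 − |b|²)².
-/

open Complex ComplexConjugate

lemma conj_add_mul_conj_mul_add_conj_mul_of_eq {σ : ℝ} {b ξ κ : ℂ}
    (hκ : κ = -(I * σ * (b * ξ + conj ξ))) :
    (conj κ + κ * conj b) * (κ + conj κ * b) = σ ^ 2 * normSq ξ * (1 - normSq b) ^ 2 := by
  have hconj : conj κ = I * σ * (conj b * conj ξ + ξ) := by
    rw [hκ]; simp only [map_neg, map_mul, map_add, conj_I, conj_ofReal, conj_conj]; ring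
  rw [hconj, hκ, normSq_eq_conj_mul_self, normSq_eq_conj_mul_self]
  linear_combination (-(σ : ℂ) ^ 2 * conj ξ * ξ * (1 - conj b * b) ^ 2) * I_sq

theorem stmt_8_general (τ σ : ℝ) (u : ℝ)
    (B κ ξ : ℂ) (hκ : κ ≠ 0)
    (h1 : (I * (τ : ℂ) * B / (u : ℂ)) * ξ + I * (τ : ℂ) * starRingEnd ℂ ξ +
      κ * ((‖ξ‖ ^ 2 : ℝ) : ℂ) = 0)
    (h2 : (I * (σ : ℂ) * B / (u : ℂ)) * ξ + I * (σ : ℂ) * starRingEnd ℂ ξ + κ = 0) :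
    (starRingEnd ℂ κ + κ * starRingEnd ℂ B / (u : ℂ)) *
      (κ + starRingEnd ℂ κ * B / (u : ℂ)) =
    ((τ : ℂ) * (σ : ℂ)) * (1 - ((‖B‖ ^ 2 : ℝ) : ℂ) / ((u : ℂ) ^ 2)) ^ 2 := by
  rw [← normSq_eq_norm_sq] at h1
  have hσξ : (σ : ℂ) * normSq ξ = τ := by
    have : κ * (σ * normSq ξ - τ) = 0 := by linear_combination σ * h1 - τ * h2
    exact sub_eq_zero.mp ((mul_eq_zero.mp this).resolve_left hκ)
  have hκ_eq : κ = -(I * σ * (B / u * ξ + conj ξ)) := by linear_combination h2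
  have hconj : conj (B / u) = conj B / u := by simp
  have hnormSq : (normSq (B / u) : ℂ) = ((‖B‖ ^ 2 : ℝ) : ℂ) / (u : ℂ) ^ 2 := by
    simp [normSq_eq_norm_sq]
  calc (conj κ + κ * conj B / u) * (κ + conj κ * B / u)
      = (conj κ + κ * conj (B / u)) * (κ + conj κ * (B / u)) := by rw [hconj]; ring
    _ = σ * (σ * normSq ξ) * (1 - normSq (B / u)) ^ 2 := by
      rw [conj_add_mul_conj_mul_add_conj_mul_of_eq hκ_eq]; ring
    _ = τ * σ * (1 - ((‖B‖ ^ 2 : ℝ) : ℂ) / (u : ℂ) ^ 2) ^ 2 := by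
      rw [hσξ, hnormSq]; ring

theorem stmt_8 (τ σ : ℝ) (hτ : τ ≠ 0) (hσ : σ ≠ 0) (u : ℝ) (hu : 0 < u)
    (B κ ξ : ℂ) (hκ : κ ≠ 0) (hB : ‖B‖ ^ 2 ≠ u ^ 2)
    (h1 : (I * (τ : ℂ) * B / (u : ℂ)) * ξ + I * (τ : ℂ) * starRingEnd ℂ ξ +
      κ * ((‖ξ‖ ^ 2 : ℝ) : ℂ) = 0)
    (h2 : (I * (σ : ℂ) * B / (u : ℂ)) * ξ + I * (σ : ℂ) * starRingEnd ℂ ξ + κ = 0) :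
    (starRingEnd ℂ κ + κ * starRingEnd ℂ B / (u : ℂ)) *
      (κ + starRingEnd ℂ κ * B / (u : ℂ)) =
    ((τ : ℂ) * (σ : ℂ)) * (1 - ((‖B‖ ^ 2 : ℝ) : ℂ) / ((u : ℂ) ^ 2)) ^ 2 :=
  stmt_8_general τ σ u B κ ξ hκ h1 h2
end

section
/- Let v : ℂ → ℂ be smooth, B : ℂ → ℂ, and define M₁ = [[∂v, B·e^{−v}], [−e^{v}, 0]] and M₂ = [[0, e^{v}], [−conj(B)·e^{−v}, ∂̄v]] (entries functions of z). If B is holomorphic (∂̄B = 0) and v satisfies v_{z z̄} + e^{2v} − |B|²·e^{−2v} = 0, then the zero-curvature condition ∂̄M₁ − ∂M₂ + [M₁, M₂] = 0 holds. -/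
open Complex Matrix

/-- Wirtinger derivative ∂/∂z of a function ℂ → ℂ (real-differentiable sense). -/
noncomputable def wderiv (f : ℂ → ℂ) (z : ℂ) : ℂ :=
  (1 / 2) * (fderiv ℝ f z 1 - I * fderiv ℝ f z I)

/-- Wirtinger derivative ∂/∂z̄ of a function ℂ → ℂ. -/
noncomputable def wderivBar (f : ℂ → ℂ) (z : ℂ) : ℂ :=
  (1 / 2) * (fderiv ℝ f z 1 + I * fderiv ℝ f z I)

lemma fderiv_exp_comp {f : ℂ → ℂ} {z : ℂ} (hf : DifferentiableAt ℝ f z) (w : ℂ) :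
    fderiv ℝ (fun x => Complex.exp (f x)) z w = Complex.exp (f z) * fderiv ℝ f z w := by
  have h1 : HasFDerivAt Complex.exp
      ((ContinuousLinearMap.smulRight (1 : ℂ →L[ℂ] ℂ) (Complex.exp (f z))).restrictScalars ℝ)
      (f z) := ((Complex.hasDerivAt_exp (f z)).hasFDerivAt).restrictScalars ℝ
  have h2 := h1.comp z hf.hasFDerivAt
  rw [show (fun x => Complex.exp (f x)) = Complex.exp ∘ f from rfl, h2.fderiv]
  simp [mul_comm]

lemma fderiv_conj_comp {f : ℂ → ℂ} {z : ℂ} (hf : DifferentiableAt ℝ f z) (w : ℂ) :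
    fderiv ℝ (fun x => starRingEnd ℂ (f x)) z w = starRingEnd ℂ (fderiv ℝ f z w) := by
  have h1 : HasFDerivAt (fun x : ℂ => starRingEnd ℂ x)
      (Complex.conjCLE.toContinuousLinearMap) (f z) := Complex.conjCLE.hasFDerivAt
  have h2 := h1.comp z hf.hasFDerivAt
  rw [show (fun x => starRingEnd ℂ (f x)) = (fun x : ℂ => starRingEnd ℂ x) ∘ f from rfl,
    h2.fderiv]
  simp

lemma diffAt_conj_comp {f : ℂ → ℂ} {z : ℂ} (hf : DifferentiableAt ℝ f z) :
    DifferentiableAt ℝ (fun x => starRingEnd ℂ (f x)) z := by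
  have h1 : HasFDerivAt (fun x : ℂ => starRingEnd ℂ x)
      (Complex.conjCLE.toContinuousLinearMap) (f z) := Complex.conjCLE.hasFDerivAt
  exact (h1.comp z hf.hasFDerivAt).differentiableAt

lemma fderiv_mul_apply {f g : ℂ → ℂ} {z : ℂ} (hf : DifferentiableAt ℝ f z)
    (hg : DifferentiableAt ℝ g z) (w : ℂ) :
    fderiv ℝ (fun x => f x * g x) z w = f z * fderiv ℝ g z w + g z * fderiv ℝ f z w := by
  rw [fderiv_fun_mul hf hg]
  simp [smul_eq_mul]

lemma wderiv_mul {f g : ℂ → ℂ} {z : ℂ} (hf : DifferentiableAt ℝ f z)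
    (hg : DifferentiableAt ℝ g z) :
    wderiv (fun x => f x * g x) z = f z * wderiv g z + g z * wderiv f z := by
  unfold wderiv; rw [fderiv_mul_apply hf hg, fderiv_mul_apply hf hg]; ring

lemma wderivBar_mul {f g : ℂ → ℂ} {z : ℂ} (hf : DifferentiableAt ℝ f z)
    (hg : DifferentiableAt ℝ g z) :
    wderivBar (fun x => f x * g x) z = f z * wderivBar g z + g z * wderivBar f z := by
  unfold wderivBar; rw [fderiv_mul_apply hf hg, fderiv_mul_apply hf hg]; ring

lemma wderiv_exp {f : ℂ → ℂ} {z : ℂ} (hf : DifferentiableAt ℝ f z) :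
    wderiv (fun x => Complex.exp (f x)) z = Complex.exp (f z) * wderiv f z := by
  unfold wderiv; rw [fderiv_exp_comp hf, fderiv_exp_comp hf]; ring

lemma wderivBar_exp {f : ℂ → ℂ} {z : ℂ} (hf : DifferentiableAt ℝ f z) :
    wderivBar (fun x => Complex.exp (f x)) z = Complex.exp (f z) * wderivBar f z := by
  unfold wderivBar; rw [fderiv_exp_comp hf, fderiv_exp_comp hf]; ring

lemma wderiv_neg (f : ℂ → ℂ) (z : ℂ) :
    wderiv (fun x => -(f x)) z = -(wderiv f z) := by
  unfold wderiv; rw [fderiv_fun_neg]; simp; ring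

lemma wderivBar_neg (f : ℂ → ℂ) (z : ℂ) :
    wderivBar (fun x => -(f x)) z = -(wderivBar f z) := by
  unfold wderivBar; rw [fderiv_fun_neg]; simp; ring

lemma wderiv_conj {f : ℂ → ℂ} {z : ℂ} (hf : DifferentiableAt ℝ f z) :
    wderiv (fun x => starRingEnd ℂ (f x)) z = starRingEnd ℂ (wderivBar f z) := by
  unfold wderiv wderivBar
  rw [fderiv_conj_comp hf, fderiv_conj_comp hf]
  simp only [_root_.map_mul, _root_.map_add, Complex.conj_I, map_div₀, _root_.map_one,
    _root_.map_ofNat]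
  ring

lemma wderiv_wderivBar_comm {v : ℂ → ℂ} (hv : ContDiff ℝ (⊤ : ℕ∞) v) (z : ℂ) :
    wderiv (fun w => wderivBar v w) z = wderivBar (fun w => wderiv v w) z := by
  have hF : ContDiff ℝ (⊤ : ℕ∞) (fderiv ℝ v) := hv.fderiv_right (by simp)
  have hFd : DifferentiableAt ℝ (fderiv ℝ v) z := hF.differentiable (by simp) z
  have hd : ∀ c : ℂ, DifferentiableAt ℝ (fun w => fderiv ℝ v w c) z := fun c =>
    ((hF.clm_apply contDiff_const).differentiable (by simp)) z
  have key : ∀ c d : ℂ, fderiv ℝ (fun w => fderiv ℝ v w c) z d =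
      fderiv ℝ (fderiv ℝ v) z d c := by
    intro c d
    have h := ((ContinuousLinearMap.apply ℝ ℂ c).hasFDerivAt.comp z hFd.hasFDerivAt)
    rw [show (fun w => fderiv ℝ v w c) =
      (ContinuousLinearMap.apply ℝ ℂ c) ∘ (fderiv ℝ v) from rfl, h.fderiv]
    rfl
  have sym : fderiv ℝ (fderiv ℝ v) z 1 I = fderiv ℝ (fderiv ℝ v) z I 1 :=
    (hv.contDiffAt.isSymmSndFDerivAt (by rw [minSmoothness_of_isRCLikeNormedField]; exact WithTop.coe_le_coe.2 le_top)) 1 I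
  have lin : ∀ (a d : ℂ), fderiv ℝ
      (fun w => (1/2 : ℂ) * (fderiv ℝ v w 1 + a * fderiv ℝ v w I)) z d =
      (1/2 : ℂ) * (fderiv ℝ (fderiv ℝ v) z d 1 + a * fderiv ℝ (fderiv ℝ v) z d I) := by
    intro a d
    rw [fderiv_const_mul (((hd 1).fun_add ((hd I).const_mul a))) ((1:ℂ)/2)]
    rw [fderiv_fun_add (hd 1) ((hd I).const_mul a)]
    rw [fderiv_const_mul (hd I) a]
    simp [smul_eq_mul, key]
    ring
  have h2 : (fun w => (1/2 : ℂ) * (fderiv ℝ v w 1 - I * fderiv ℝ v w I)) =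
      fun w => (1/2 : ℂ) * (fderiv ℝ v w 1 + (-I) * fderiv ℝ v w I) := by
    funext w; ring
  unfold wderiv wderivBar
  rw [h2, lin, lin, lin, lin, sym]; ring

theorem stmt_13 (v B : ℂ → ℂ)
    (hv : ContDiff ℝ (⊤ : ℕ∞) v) (hBsm : ContDiff ℝ (⊤ : ℕ∞) B)
    (hBhol : ∀ z, wderivBar B z = 0)
    (hGauss : ∀ z, wderivBar (fun w => wderiv v w) z + Complex.exp (2 * v z) -
      B z * starRingEnd ℂ (B z) * Complex.exp (-(2 * v z)) = 0)
    (M₁ M₂ : ℂ → Matrix (Fin 2) (Fin 2) ℂ)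
    (hM₁ : ∀ z, M₁ z = !![wderiv v z, B z * Complex.exp (-(v z));
                          -Complex.exp (v z), 0])
    (hM₂ : ∀ z, M₂ z = !![0, Complex.exp (v z);
                          -starRingEnd ℂ (B z) * Complex.exp (-(v z)), wderivBar v z]) :
    ∀ z, (Matrix.of fun i j => wderivBar (fun w => M₁ w i j) z) -
         (Matrix.of fun i j => wderiv (fun w => M₂ w i j) z) +
         (M₁ z * M₂ z - M₂ z * M₁ z) = 0 := by
  intro z
  have hvd : DifferentiableAt ℝ v z := hv.differentiable (by simp) z
  have hBd : DifferentiableAt ℝ B z := hBsm.differentiable (by simp) z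
  have hexpnv : DifferentiableAt ℝ (fun w => Complex.exp (-(v w))) z :=
    (hv.neg.cexp.differentiable (by simp)) z
  have hconjB : DifferentiableAt ℝ (fun w => starRingEnd ℂ (B w)) z := diffAt_conj_comp hBd
  have e0 : wderiv (fun _ : ℂ => (0:ℂ)) z = 0 := by
    unfold wderiv; rw [fderiv_fun_const]; simp
  have e0' : wderivBar (fun _ : ℂ => (0:ℂ)) z = 0 := by
    unfold wderivBar; rw [fderiv_fun_const]; simp
  have e1 : wderivBar (fun w => B w * Complex.exp (-(v w))) z =
      -(B z * Complex.exp (-(v z)) * wderivBar v z) := by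
    rw [wderivBar_mul hBd hexpnv, wderivBar_exp hvd.fun_neg, wderivBar_neg, hBhol z]; ring
  have e2 : wderivBar (fun w => -Complex.exp (v w)) z =
      -(Complex.exp (v z) * wderivBar v z) := by
    rw [wderivBar_neg, wderivBar_exp hvd]
  have e3 : wderiv (fun w => Complex.exp (v w)) z = Complex.exp (v z) * wderiv v z :=
    wderiv_exp hvd
  have e4 : wderiv (fun w => -starRingEnd ℂ (B w) * Complex.exp (-(v w))) z =
      starRingEnd ℂ (B z) * Complex.exp (-(v z)) * wderiv v z := by
    rw [show (fun w => -starRingEnd ℂ (B w) * Complex.exp (-(v w))) =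
      fun w => -(starRingEnd ℂ (B w) * Complex.exp (-(v w))) from by funext w; ring]
    rw [wderiv_neg, wderiv_mul hconjB hexpnv, wderiv_exp hvd.fun_neg, wderiv_neg,
      wderiv_conj hBd, hBhol z]
    simp; ring
  have e5 : wderiv (fun w => wderivBar v w) z = wderivBar (fun w => wderiv v w) z :=
    wderiv_wderivBar_comm hv z
  have hG : wderivBar (fun w => wderiv v w) z =
      B z * starRingEnd ℂ (B z) * Complex.exp (-(2 * v z)) - Complex.exp (2 * v z) := by
    linear_combination hGauss z
  have hexp2 : Complex.exp (2 * v z) = Complex.exp (v z) * Complex.exp (v z) := by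
    rw [two_mul, Complex.exp_add]
  have hexpn2 : Complex.exp (-(2 * v z)) = Complex.exp (-(v z)) * Complex.exp (-(v z)) := by
    rw [two_mul, neg_add, Complex.exp_add]
  ext i j
  fin_cases i <;> fin_cases j <;>
    simp only [hM₁, hM₂, Matrix.sub_apply, Matrix.add_apply, Matrix.of_apply,
      Matrix.zero_apply, Matrix.mul_apply, Fin.sum_univ_two, Fin.isValue, Fin.mk_zero,
      Fin.mk_one, Matrix.cons_val', Matrix.cons_val_zero, Matrix.cons_val_one,
      Matrix.head_cons, Matrix.empty_val', Matrix.cons_val_fin_one, Matrix.head_fin_const] <;>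
  first
    | (rw [hG, e0, hexp2, hexpn2]; ring)
    | (rw [e1, e3]; ring)
    | (rw [e2, e4]; ring)
    | (rw [e0', e5, hG, hexp2, hexpn2]; ring)
end

section
/- Let v : ℂ → ℂ be smooth and let B be holomorphic. If v and B satisfy the zero-curvature condition ∂̄M₁ − ∂M₂ + [M₁, M₂] = 0 for M₁ = [[v_z, B e^{−v}], [−e^{v}, 0]], M₂ = [[0, e^{v}], [−conj(B) e^{−v}, v_{z̄}]], then v_{z z̄} + e^{2v} − |B|² e^{−2v} = 0 holds. -/
open Complex Matrix

theorem stmt_14 (v B : ℂ → ℂ)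
    (hv : ContDiff ℝ (⊤ : ℕ∞) v) (hBsm : ContDiff ℝ (⊤ : ℕ∞) B)
    (hBhol : ∀ z, wderivBar B z = 0)
    (M₁ M₂ : ℂ → Matrix (Fin 2) (Fin 2) ℂ)
    (hM₁ : ∀ z, M₁ z = !![wderiv v z, B z * Complex.exp (-(v z));
                          -Complex.exp (v z), 0])
    (hM₂ : ∀ z, M₂ z = !![0, Complex.exp (v z);
                          -starRingEnd ℂ (B z) * Complex.exp (-(v z)), wderivBar v z])
    (hflat : ∀ z, (Matrix.of fun i j => wderivBar (fun w => M₁ w i j) z) -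
         (Matrix.of fun i j => wderiv (fun w => M₂ w i j) z) +
         (M₁ z * M₂ z - M₂ z * M₁ z) = 0) :
    ∀ z, wderivBar (fun w => wderiv v w) z + Complex.exp (2 * v z) -
      B z * starRingEnd ℂ (B z) * Complex.exp (-(2 * v z)) = 0 := by
  intro z
  have h := congrFun (congrFun (hflat z) 0) 0
  have e1 : (fun w => M₁ w 0 0) = fun w => wderiv v w := by
    funext w; rw [hM₁]; simp
  have e2 : (fun w => M₂ w 0 0) = fun _ => (0 : ℂ) := by
    funext w; rw [hM₂]; simp
  have e3 : wderiv (fun _ => (0 : ℂ)) z = 0 := by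
    simp [wderiv, fderiv_const]
  rw [Matrix.add_apply, Matrix.sub_apply, Matrix.sub_apply, Matrix.of_apply,
    Matrix.of_apply, Matrix.mul_apply, Matrix.mul_apply, Fin.sum_univ_two,
    e1, e2, e3, hM₁, hM₂] at h
  simp at h
  have hexp1 : Complex.exp (-(v z)) * Complex.exp (-(v z)) = Complex.exp (-(2 * v z)) := by
    rw [← Complex.exp_add]; ring_nf
  have hexp2 : Complex.exp (v z) * Complex.exp (v z) = Complex.exp (2 * v z) := by
    rw [← Complex.exp_add]; ring_nf
  have := h
  linear_combination h + (B z * starRingEnd ℂ (B z)) * hexp1 - hexp2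
end
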